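/- Let q = 2^m, let U be the group of (q+1)-st roots of unity in GF(q^2), and let u1,...,u5 be elements of U (with u1, u2, u3 pairwise distinct) such that the second elementary symmetric polynomial σ_{5,2}(u1,...,u5) = 0. Then with s1 = u1+u2+u3, s2 = u1u2+u2u3+u3u1, s3 = u1u2u3, one has (s1^2 + s2)(u4 + u5) = s1*s2 + s3 and (s1^2 + s2)*u4*u5 = s2^2 + s1*s3. -/

import Mathlib

/-! The Frobenius `x ↦ x ^ q` is a ring endomorphism of `GF(q²)` inverting every element of `U`,
so it turns `σ₂(u) = 0` into `σ₂(u⁻¹) = 0`; clearing denominators, `σ₃(u) = 0` as well.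
Splitting `σ₂` and `σ₃` along `{u₁, u₂, u₃} ∪ {u₄, u₅}` gives two equations that are linear in
`u₄ + u₅` and `u₄ u₅`, and eliminating in characteristic two yields the claimed identities. -/

theorem charP_two_of_card_eq_two_pow {F : Type*} [Field F] [Fintype F] {n : ℕ}
    (h : Fintype.card F = 2 ^ n) : CharP F 2 := by
  obtain ⟨p, hchar, k, hp, hcard⟩ := FiniteField.card' F
  have hp2 : p ∣ 2 := hp.dvd_of_dvd_pow (n := n) (h ▸ hcard ▸ dvd_pow_self p k.ne_zero)
  rwa [(Nat.prime_dvd_prime_iff_eq hp Nat.prime_two).mp hp2] at hchar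

theorem pow_eq_inv_of_pow_succ_eq_one {G : Type*} [DivisionMonoid G] {u : G} {k : ℕ}
    (h : u ^ (k + 1) = 1) : u ^ k = u⁻¹ :=
  eq_inv_of_mul_eq_one_left (by rwa [← pow_succ])

theorem ne_zero_of_pow_succ_eq_one {M : Type*} [MonoidWithZero M] [Nontrivial M] {u : M}
    {k : ℕ} (h : u ^ (k + 1) = 1) : u ≠ 0 := by
  rintro rfl
  simp at h

theorem esymm3_eq_zero_of_esymm2_eq_zero {F : Type*} [Field F] {p : ℕ} [ExpChar F p] {m : ℕ}
    {u1 u2 u3 u4 u5 : F}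
    (h1 : u1 ^ (p ^ m + 1) = 1) (h2 : u2 ^ (p ^ m + 1) = 1) (h3 : u3 ^ (p ^ m + 1) = 1)
    (h4 : u4 ^ (p ^ m + 1) = 1) (h5 : u5 ^ (p ^ m + 1) = 1)
    (hσ2 : u1 * u2 + u1 * u3 + u1 * u4 + u1 * u5 + u2 * u3 + u2 * u4 + u2 * u5
        + u3 * u4 + u3 * u5 + u4 * u5 = 0) :
    u1 * u2 * u3 + u1 * u2 * u4 + u1 * u2 * u5 + u1 * u3 * u4 + u1 * u3 * u5 + u1 * u4 * u5
        + u2 * u3 * u4 + u2 * u3 * u5 + u2 * u4 * u5 + u3 * u4 * u5 = 0 := by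
  have hσ2_inv := congrArg (iterateFrobenius F p m) hσ2
  simp only [map_add, map_mul, map_zero, iterateFrobenius_def, pow_eq_inv_of_pow_succ_eq_one h1,
    pow_eq_inv_of_pow_succ_eq_one h2, pow_eq_inv_of_pow_succ_eq_one h3,
    pow_eq_inv_of_pow_succ_eq_one h4, pow_eq_inv_of_pow_succ_eq_one h5] at hσ2_inv
  field_simp [ne_zero_of_pow_succ_eq_one h1, ne_zero_of_pow_succ_eq_one h2,
    ne_zero_of_pow_succ_eq_one h3, ne_zero_of_pow_succ_eq_one h4,
    ne_zero_of_pow_succ_eq_one h5] at hσ2_inv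
  linear_combination hσ2_inv

theorem CharTwo.sum_prod_of_esymm_eq_zero {R : Type*} [CommRing R] [CharP R 2]
    {s1 s2 s3 t1 t2 : R}
    (hσ2 : s2 + s1 * t1 + t2 = 0) (hσ3 : s3 + s2 * t1 + s1 * t2 = 0) :
    (s1 ^ 2 + s2) * t1 = s1 * s2 + s3 ∧ (s1 ^ 2 + s2) * t2 = s2 ^ 2 + s1 * s3 := by
  have two_eq_zero : (2 : R) = 0 := CharTwo.two_eq_zero
  have ht2 : t2 = s2 + s1 * t1 := by
    linear_combination hσ2 - (s2 + s1 * t1) * two_eq_zero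
  have ht1 : (s1 ^ 2 + s2) * t1 = s1 * s2 + s3 := by
    linear_combination hσ3 - s1 * ht2 - (s1 * s2 + s3) * two_eq_zero
  exact ⟨ht1, by
    linear_combination (s1 ^ 2 + s2) * ht2 + s1 * ht1 + s1 ^ 2 * s2 * two_eq_zero⟩

theorem stmt_7_general (m : ℕ) (F : Type*) [Field F] [Fintype F]
    (hF : Fintype.card F = 2 ^ (2 * m))
    (u1 u2 u3 u4 u5 : F)
    (h1 : u1 ^ (2 ^ m + 1) = 1) (h2 : u2 ^ (2 ^ m + 1) = 1)
    (h3 : u3 ^ (2 ^ m + 1) = 1) (h4 : u4 ^ (2 ^ m + 1) = 1)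
    (h5 : u5 ^ (2 ^ m + 1) = 1)
    (hsigma : u1 * u2 + u1 * u3 + u1 * u4 + u1 * u5 + u2 * u3 + u2 * u4 + u2 * u5
        + u3 * u4 + u3 * u5 + u4 * u5 = 0) :
    ((u1 + u2 + u3) ^ 2 + (u1 * u2 + u2 * u3 + u3 * u1)) * (u4 + u5)
        = (u1 + u2 + u3) * (u1 * u2 + u2 * u3 + u3 * u1) + u1 * u2 * u3 ∧
    ((u1 + u2 + u3) ^ 2 + (u1 * u2 + u2 * u3 + u3 * u1)) * (u4 * u5)
        = (u1 * u2 + u2 * u3 + u3 * u1) ^ 2 + (u1 + u2 + u3) * (u1 * u2 * u3) := by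
  have := charP_two_of_card_eq_two_pow hF
  have hσ3 := esymm3_eq_zero_of_esymm2_eq_zero h1 h2 h3 h4 h5 hsigma
  exact CharTwo.sum_prod_of_esymm_eq_zero (by linear_combination hsigma)
    (by linear_combination hσ3)

/-- If `u1, …, u5` are `(q+1)`-st roots of unity in `GF(q^2)` (`q = 2^m`), `u1, u2, u3`
pairwise distinct, with `σ_{5,2}(u1,…,u5) = 0`, then
`(s1^2+s2)(u4+u5) = s1*s2+s3` and `(s1^2+s2)·u4·u5 = s2^2+s1*s3`. -/
theorem stmt_7 (m : ℕ) (hm : 0 < m) (F : Type*) [Field F] [Fintype F]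
    (hF : Fintype.card F = 2 ^ (2 * m))
    (u1 u2 u3 u4 u5 : F)
    (h1 : u1 ^ (2 ^ m + 1) = 1) (h2 : u2 ^ (2 ^ m + 1) = 1)
    (h3 : u3 ^ (2 ^ m + 1) = 1) (h4 : u4 ^ (2 ^ m + 1) = 1)
    (h5 : u5 ^ (2 ^ m + 1) = 1)
    (h12 : u1 ≠ u2) (h13 : u1 ≠ u3) (h23 : u2 ≠ u3)
    (hsigma : u1 * u2 + u1 * u3 + u1 * u4 + u1 * u5 + u2 * u3 + u2 * u4 + u2 * u5
        + u3 * u4 + u3 * u5 + u4 * u5 = 0) :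
    ((u1 + u2 + u3) ^ 2 + (u1 * u2 + u2 * u3 + u3 * u1)) * (u4 + u5)
        = (u1 + u2 + u3) * (u1 * u2 + u2 * u3 + u3 * u1) + u1 * u2 * u3 ∧
    ((u1 + u2 + u3) ^ 2 + (u1 * u2 + u2 * u3 + u3 * u1)) * (u4 * u5)
        = (u1 * u2 + u2 * u3 + u3 * u1) ^ 2 + (u1 + u2 + u3) * (u1 * u2 * u3) :=
  stmt_7_general m F hF u1 u2 u3 u4 u5 h1 h2 h3 h4 h5 hsigma
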